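/- Let K ⊂ ℝⁿ be a strictly convex, smooth, compact set with 0 in its interior, and let F_K(x) = −ln(1 − ‖x‖_K) − ‖x‖_K on {x : ‖x‖_K < 1}. Then for every x with 0 < ‖x‖_K < 1 and every d ∈ ℝⁿ \ {0}: ∇F_K(x) = (‖x‖_K/(1 − ‖x‖_K))·∇‖·‖_K(x); the Fenchel conjugate satisfies F_K*(d) = ‖d‖_{K°} − ln(1 + ‖d‖_{K°}) for all d ∈ ℝⁿ; and ∇F_K*(d) = (‖d‖_{K°}/(1 + ‖d‖_{K°}))·∇‖·‖_{K°}(d). Moreover F_K is differentiable on the interior of K and F_K* is differentiable on all of ℝⁿ. -/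

import Mathlib

/-!
Both gauges are support functions: `‖x‖_K = max_{d ∈ K°} ⟪d, x⟫` (by Hahn–Banach separation) and
`‖d‖_{K°} = max_{x ∈ K} ⟪x, d⟫`. By Danskin's theorem such a maximum of linear functionals over a
compact set is differentiable wherever the maximiser is unique. For `x ≠ 0` smoothness of `K` makes
the maximising `d` unique (it is the normal to `K` at `x / ‖x‖_K`); for `d ≠ 0` strict convexity
makes the maximising `x` unique (two maximisers would have an interior midpoint that is again a
maximiser). As `F_K = f ∘ ‖·‖_K` with `f t = -log (1 - t) - t`, the chain rule gives the gradient;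
at `0` the gauge is only Lipschitz, but `f' 0 = 0`. For the conjugate, `⟪x, d⟫ ≤ ‖x‖_K ‖d‖_{K°}`
reduces the supremum to the one-dimensional conjugate `sup_t (t s - f t) = s - log (1 + s)`, which
is attained at `t = s / (1 + s)` along a maximiser of `⟪·, d⟫` on `K`.
-/

open scoped InnerProductSpace
open scoped Pointwise
open MeasureTheory

noncomputable section

abbrev Euc (n : ℕ) := EuclideanSpace ℝ (Fin n)

/-- The polar set `K° = {d | ⟪d, x⟫ ≤ 1 for all x ∈ K}`. -/
def polarSet {n : ℕ} (K : Set (Euc n)) : Set (Euc n) := {d | ∀ x ∈ K, ⟪d, x⟫_ℝ ≤ 1}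

/-- The normal cone of `K` at `y`. -/
def normalCone {n : ℕ} (K : Set (Euc n)) (y : Euc n) : Set (Euc n) :=
  {d | ∀ x ∈ K, 0 ≤ ⟪d, y - x⟫_ℝ}

/-- A set is smooth if at each boundary point there is exactly one normal direction in `∂K°`. -/
def SmoothSet {n : ℕ} (K : Set (Euc n)) : Prop :=
  ∀ x ∈ frontier K, ∃! d, d ∈ normalCone K x ∩ frontier (polarSet K)

/-- A set is strictly convex if the midpoint of two distinct boundary points is interior. -/
def StrictlyConvexSet {n : ℕ} (K : Set (Euc n)) : Prop :=
  ∀ x₁ ∈ frontier K, ∀ x₂ ∈ frontier K, x₁ ≠ x₂ → midpoint ℝ x₁ x₂ ∈ interior K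

/-- `(α, q)`-uniform convexity of a set w.r.t. its gauge. -/
def UniformlyConvexSet {n : ℕ} (K : Set (Euc n)) (α q : ℝ) : Prop :=
  ∀ x ∈ K, ∀ y ∈ K, ∀ z ∈ K, ∀ γ ∈ Set.Icc (0:ℝ) 1,
    γ • x + (1 - γ) • y + (α / q * (γ * (1 - γ)) * gauge K (x - y) ^ q) • z ∈ K

/-- The barrier function `F_K(x) = -ln(1 - ‖x‖_K) - ‖x‖_K`. -/
def FK {n : ℕ} (K : Set (Euc n)) (x : Euc n) : ℝ := -Real.log (1 - gauge K x) - gauge K x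

/-- Fenchel conjugate of the barrier `F_K` (defined on `D_K = {‖x‖_K < 1}`). -/
def FstarK {n : ℕ} (K : Set (Euc n)) (d : Euc n) : ℝ :=
  sSup ((fun x => ⟪x, d⟫_ℝ - FK K x) '' {x | gauge K x < 1})

/-- Bregman divergence `D_F(u, v) = F(u) - F(v) - ⟪∇F(v), u - v⟫`. -/
def breg {n : ℕ} (F : Euc n → ℝ) (u v : Euc n) : ℝ :=
  F u - F v - ⟪gradient F v, u - v⟫_ℝ

def l1Ball {n : ℕ} (r : ℝ) : Set (Euc n) := {x | ∑ i, |x i| ≤ r}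
def linfBall {n : ℕ} (R : ℝ) : Set (Euc n) := {x | ∀ i, |x i| ≤ R}
def l2Ball {n : ℕ} (r : ℝ) : Set (Euc n) := Metric.closedBall 0 r
def lqBall {n : ℕ} (q r : ℝ) : Set (Euc n) := {x | ∑ i, |x i| ^ q ≤ r ^ q}

open Topology Filter Asymptotics

section Gauge

variable {E : Type*} [NormedAddCommGroup E] [NormedSpace ℝ E] {s : Set E}

lemma HasDerivAt.hasFDerivAt_comp_of_isBigO {φ : ℝ → ℝ} {g : E → ℝ} {x : E}
    (hφ : HasDerivAt φ 0 (g x)) (hg : (fun y => g y - g x) =O[𝓝 x] fun y => y - x) :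
    HasFDerivAt (φ ∘ g) (0 : StrongDual ℝ E) x := by
  have hgx : Tendsto g (𝓝 x) (𝓝 (g x)) :=
    tendsto_sub_nhds_zero_iff.1 (hg.trans_tendsto (tendsto_sub_nhds_zero_iff.2 tendsto_id))
  rw [hasDerivAt_iff_isLittleO] at hφ
  rw [hasFDerivAt_iff_isLittleO]
  simpa [Function.comp_def] using (hφ.comp_tendsto hgx).trans_isBigO hg

lemma gauge_pos_of_ne_zero (hb : Bornology.IsBounded s) (h0 : s ∈ 𝓝 0) {x : E} (hx : x ≠ 0) :
    0 < gauge s x :=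
  (gauge_pos (absorbent_nhds_zero h0) ((NormedSpace.isVonNBounded_iff ℝ).2 hb)).2 hx

lemma mem_gauge_smul_self (hc : Convex ℝ s) (hcl : IsClosed s) (hb : Bornology.IsBounded s)
    (h0 : s ∈ 𝓝 0) (x : E) : x ∈ gauge s x • s := by
  rcases eq_or_ne x 0 with rfl | hx
  · exact Set.zero_mem_smul_set (mem_of_mem_nhds h0)
  have hpos := gauge_pos_of_ne_zero hb h0 hx
  have hle : gauge s ((gauge s x)⁻¹ • x) ≤ 1 := by
    rw [gauge_smul_of_nonneg (inv_nonneg.2 hpos.le), smul_eq_mul, inv_mul_cancel₀ hpos.ne']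
  have hmem := (gauge_le_one_iff_mem_closure hc h0).1 hle
  rw [hcl.closure_eq] at hmem
  exact (Set.mem_smul_set_iff_inv_smul_mem₀ hpos.ne' _ _).2 hmem

lemma gauge_isBigO (h0 : s ∈ 𝓝 0) : gauge s =O[𝓝 0] fun y => y := by
  obtain ⟨r, hr, hball⟩ := Metric.mem_nhds_iff.1 h0
  refine IsBigO.of_bound r⁻¹ (Eventually.of_forall fun y => ?_)
  rw [Real.norm_eq_abs, abs_of_nonneg (gauge_nonneg y), le_inv_mul_iff₀ hr]
  exact mul_gauge_le_norm hball

lemma differentiableAt_comp_gauge_zero {φ : ℝ → ℝ} (hφ : HasDerivAt φ 0 0) (h0 : s ∈ 𝓝 0) :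
    DifferentiableAt ℝ (φ ∘ gauge s) 0 := by
  have hφ' : HasDerivAt φ 0 (gauge s 0) := by rwa [gauge_zero]
  exact (hφ'.hasFDerivAt_comp_of_isBigO (by simpa using gauge_isBigO h0)).differentiableAt

end Gauge

section Gradient

variable {E : Type*} [NormedAddCommGroup E] [InnerProductSpace ℝ E] {D : Set E} {M : E → ℝ}

lemma sub_le_inner_sub_of_isGreatest (hM : ∀ x, IsGreatest ((fun d => ⟪d, x⟫_ℝ) '' D) (M x))
    {d x y : E} (hd : d ∈ D) (hdx : ⟪d, x⟫_ℝ = M x) : M x - M y ≤ ⟪d, x - y⟫_ℝ := by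
  have hdy : ⟪d, y⟫_ℝ ≤ M y := (hM y).2 ⟨d, hd, rfl⟩
  rw [inner_sub_right]
  linarith

lemma tendsto_argmax_of_isGreatest_inner (hD : IsCompact D)
    (hM : ∀ x, IsGreatest ((fun d => ⟪d, x⟫_ℝ) '' D) (M x)) {x₀ d₀ : E} (hd₀ : d₀ ∈ D)
    (hmax : ⟪d₀, x₀⟫_ℝ = M x₀) (huniq : ∀ d ∈ D, ⟪d, x₀⟫_ℝ = M x₀ → d = d₀)
    {dx : E → E} (hdxD : ∀ x, dx x ∈ D) (hdx : ∀ x, ⟪dx x, x⟫_ℝ = M x) :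
    Tendsto dx (𝓝 x₀) (𝓝 d₀) := by
  obtain ⟨C, hC⟩ := hD.isBounded.exists_norm_le
  have hinner : ∀ d ∈ D, ∀ v : E, ⟪d, v⟫_ℝ ≤ C * ‖v‖ := fun d hd v =>
    (real_inner_le_norm d v).trans (mul_le_mul_of_nonneg_right (hC d hd) (norm_nonneg v))
  rw [Metric.tendsto_nhds]
  intro c hc
  set A := D ∩ {d | c ≤ dist d d₀}
  have hA : IsCompact A :=
    hD.inter_right (isClosed_le continuous_const (continuous_id.dist continuous_const))
  have hgap : ∀ d ∈ A, 0 < M x₀ - ⟪d, x₀⟫_ℝ := by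
    rintro d ⟨hdD, hdc : c ≤ dist d d₀⟩
    refine sub_pos.2 (lt_of_le_of_ne ((hM x₀).2 ⟨d, hdD, rfl⟩) fun h => ?_)
    rw [huniq d hdD h, dist_self] at hdc
    linarith
  -- off `d₀`, the compact `A` stays `δ` below the maximum; moving `x₀` by less than `δ / 2C`
  -- cannot close that gap
  obtain ⟨δ, hδ, hδA⟩ := hA.exists_forall_le' (by fun_prop) hgap
  have hsmall : Tendsto (fun x => 2 * C * ‖x - x₀‖) (𝓝 x₀) (𝓝 0) := by
    simpa using (tendsto_iff_norm_sub_tendsto_zero.1 (tendsto_id (x := 𝓝 x₀))).const_mul (2 * C)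
  filter_upwards [hsmall.eventually (gt_mem_nhds hδ)] with x hx
  by_contra hfar
  have hxA := hδA (dx x) ⟨hdxD x, not_lt.1 hfar⟩
  have h₁ := sub_le_inner_sub_of_isGreatest hM hd₀ hmax (y := x)
  have h₂ := hinner _ (hdxD x) (x - x₀)
  have h₃ := hinner _ hd₀ (x₀ - x)
  rw [norm_sub_rev] at h₃
  have hsplit : ⟪dx x, x₀⟫_ℝ = M x - ⟪dx x, x - x₀⟫_ℝ := by
    rw [inner_sub_right, hdx]
    ring
  linarith

/-- Danskin's theorem. -/
theorem hasGradientAt_of_isGreatest_inner [CompleteSpace E] (hD : IsCompact D)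
    (hM : ∀ x, IsGreatest ((fun d => ⟪d, x⟫_ℝ) '' D) (M x)) {x₀ d₀ : E} (hd₀ : d₀ ∈ D)
    (hmax : ⟪d₀, x₀⟫_ℝ = M x₀) (huniq : ∀ d ∈ D, ⟪d, x₀⟫_ℝ = M x₀ → d = d₀) :
    HasGradientAt M d₀ x₀ := by
  choose dx hdxD hdx using fun x => (hM x).1
  have hlim := tendsto_argmax_of_isGreatest_inner hD hM hd₀ hmax huniq hdxD hdx
  have hbound : ∀ x, ‖M x - M x₀ - ⟪d₀, x - x₀⟫_ℝ‖ ≤ ‖dx x - d₀‖ * ‖x - x₀‖ := by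
    intro x
    have h₁ := sub_le_inner_sub_of_isGreatest hM (hdxD x) (hdx x) (y := x₀)
    have h₂ := sub_le_inner_sub_of_isGreatest hM hd₀ hmax (y := x)
    have h₃ := real_inner_le_norm (dx x - d₀) (x - x₀)
    rw [inner_sub_left] at h₃
    rw [← neg_sub x x₀, inner_neg_right] at h₂
    rw [Real.norm_eq_abs, abs_le]
    constructor <;> linarith
  rw [hasGradientAt_iff_isLittleO, isLittleO_iff]
  intro ε hε
  filter_upwards [hlim.eventually (Metric.closedBall_mem_nhds d₀ hε)] with x hx
  rw [dist_eq_norm] at hx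
  exact (hbound x).trans (mul_le_mul_of_nonneg_right hx (norm_nonneg _))

lemma HasDerivAt.gradient_comp [CompleteSpace E] {φ : ℝ → ℝ} {c : ℝ} {g : E → ℝ} {x : E}
    (hφ : HasDerivAt φ c (g x)) (hg : DifferentiableAt ℝ g x) :
    gradient (φ ∘ g) x = c • gradient g x := by
  refine HasGradientAt.gradient ?_
  rw [hasGradientAt_iff_hasFDerivAt, map_smulₛₗ]
  exact hφ.comp_hasFDerivAt x hg.hasGradientAt.hasFDerivAt

end Gradient

def logBarrier (t : ℝ) : ℝ := -Real.log (1 - t) - t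

def logBarrierConj (s : ℝ) : ℝ := s - Real.log (1 + s)

lemma hasDerivAt_logBarrier {t : ℝ} (ht : t < 1) :
    HasDerivAt logBarrier (t / (1 - t)) t := by
  have h1t : 1 - t ≠ 0 := sub_ne_zero.2 ht.ne'
  have h : HasDerivAt (fun r => -Real.log (1 - r) - r) (-(-1 / (1 - t)) - 1) t :=
    (((hasDerivAt_id' t).const_sub 1).log h1t).neg.sub (hasDerivAt_id' t)
  exact h.congr_deriv (by field_simp; ring)

lemma hasDerivAt_logBarrierConj {s : ℝ} (hs : -1 < s) :
    HasDerivAt logBarrierConj (s / (1 + s)) s := by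
  have h1s : 1 + s ≠ 0 := by linarith
  have h : HasDerivAt (fun r => r - Real.log (1 + r)) (1 - 1 / (1 + s)) s :=
    (hasDerivAt_id' s).sub (((hasDerivAt_id' s).const_add 1).log h1s)
  exact h.congr_deriv (by field_simp; ring)

lemma mul_sub_logBarrier_le {t s : ℝ} (ht : t < 1) (hs : -1 < s) :
    t * s - logBarrier t ≤ logBarrierConj s := by
  have h := Real.log_le_sub_one_of_pos (mul_pos (sub_pos.2 ht) (neg_lt_iff_pos_add'.1 hs))
  rw [Real.log_mul (sub_pos.2 ht).ne' (by linarith)] at h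
  unfold logBarrier logBarrierConj
  nlinarith

lemma mul_sub_logBarrier_eq {s : ℝ} (hs : -1 < s) :
    s / (1 + s) * s - logBarrier (s / (1 + s)) = logBarrierConj s := by
  have h1s : 0 < 1 + s := by linarith
  have h : 1 - s / (1 + s) = (1 + s)⁻¹ := by field_simp; ring
  unfold logBarrier logBarrierConj
  rw [h, Real.log_inv]
  field_simp
  ring

section Polar

variable {n : ℕ} {K : Set (Euc n)}

lemma zero_mem_polarSet : (0 : Euc n) ∈ polarSet K := fun x _ => by simp

lemma isClosed_polarSet : IsClosed (polarSet K) := by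
  simp only [polarSet, Set.ofPred_forall]
  exact isClosed_biInter fun x _ =>
    isClosed_le (continuous_id.inner continuous_const) continuous_const

lemma polarSet_mem_nhds_zero (hK : Bornology.IsBounded K) : polarSet K ∈ 𝓝 0 := by
  obtain ⟨R, hR, hKR⟩ := hK.subset_closedBall_lt 0 0
  filter_upwards [Metric.closedBall_mem_nhds 0 (inv_pos.2 hR)] with d hd x hx
  rw [mem_closedBall_zero_iff] at hd
  have hx' := mem_closedBall_zero_iff.1 (hKR hx)
  calc ⟪d, x⟫_ℝ ≤ ‖d‖ * ‖x‖ := real_inner_le_norm _ _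
    _ ≤ R⁻¹ * R := by gcongr
    _ = 1 := inv_mul_cancel₀ hR.ne'

lemma isBounded_polarSet (hK : K ∈ 𝓝 0) : Bornology.IsBounded (polarSet K) := by
  obtain ⟨r, hr, hball⟩ := Metric.nhds_basis_closedBall.mem_iff.1 hK
  refine isBounded_iff_forall_norm_le.2 ⟨r⁻¹, fun d hd => ?_⟩
  rcases eq_or_ne d 0 with rfl | hd0
  · simpa using hr.le
  have hnorm : 0 < ‖d‖ := norm_pos_iff.2 hd0
  have hy : (r * ‖d‖⁻¹) • d ∈ K := hball <| by
    rw [mem_closedBall_zero_iff, norm_smul, Real.norm_of_nonneg (by positivity), mul_assoc,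
      inv_mul_cancel₀ hnorm.ne', mul_one]
  have hdy := hd _ hy
  rw [real_inner_smul_right, real_inner_self_eq_norm_sq] at hdy
  rw [← one_div, le_div_iff₀' hr]
  calc r * ‖d‖ = r * ‖d‖⁻¹ * ‖d‖ ^ 2 := by field_simp
    _ ≤ 1 := hdy

lemma isCompact_polarSet (hK : K ∈ 𝓝 0) : IsCompact (polarSet K) :=
  Metric.isCompact_of_isClosed_isBounded isClosed_polarSet (isBounded_polarSet hK)

lemma mem_smul_polarSet_iff {a : ℝ} (ha : 0 < a) {d : Euc n} :
    d ∈ a • polarSet K ↔ ∀ x ∈ K, ⟪x, d⟫_ℝ ≤ a := by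
  rw [Set.mem_smul_set_iff_inv_smul_mem₀ ha.ne']
  refine forall₂_congr fun x _ => ?_
  rw [real_inner_smul_left, real_inner_comm, inv_mul_le_one₀ ha]

lemma isGreatest_inner_gauge_polarSet (hK : IsCompact K) (h0 : (0 : Euc n) ∈ K) (d : Euc n) :
    IsGreatest ((fun x => ⟪x, d⟫_ℝ) '' K) (gauge (polarSet K) d) := by
  obtain ⟨x₀, hx₀, hmax⟩ := hK.exists_isMaxOn ⟨0, h0⟩
    (f := fun x => ⟪x, d⟫_ℝ) (continuous_id.inner continuous_const).continuousOn
  have hub : ∀ x ∈ K, ⟪x, d⟫_ℝ ≤ ⟪x₀, d⟫_ℝ := fun x hx => hmax hx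
  have hm0 : 0 ≤ ⟪x₀, d⟫_ℝ := by simpa using hub 0 h0
  suffices gauge (polarSet K) d = ⟪x₀, d⟫_ℝ by
    rw [this]
    exact ⟨⟨x₀, hx₀, rfl⟩, Set.forall_mem_image.2 hub⟩
  apply le_antisymm
  · refine le_of_forall_gt_imp_ge_of_dense fun a ha => ?_
    exact gauge_le_of_mem (hm0.trans ha.le)
      ((mem_smul_polarSet_iff (hm0.trans_lt ha)).2 fun x hx => (hub x hx).trans ha.le)
  · refine le_of_forall_gt_imp_ge_of_dense fun a ha => ?_
    obtain ⟨b, hb, hba, hdb⟩ :=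
      exists_lt_of_gauge_lt (absorbent_nhds_zero (polarSet_mem_nhds_zero hK.isBounded)) ha
    exact ((mem_smul_polarSet_iff hb).1 hdb x₀ hx₀).trans hba.le

lemma inner_le_gauge_mul_gauge_polarSet (hK : IsCompact K) (hKc : Convex ℝ K) (h0 : K ∈ 𝓝 0)
    (x d : Euc n) :
    ⟪x, d⟫_ℝ ≤ gauge K x * gauge (polarSet K) d := by
  obtain ⟨y, hy, hxy : gauge K x • y = x⟩ :=
    mem_gauge_smul_self hKc hK.isClosed hK.isBounded h0 x
  have hyd : ⟪y, d⟫_ℝ ≤ gauge (polarSet K) d :=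
    (isGreatest_inner_gauge_polarSet hK (mem_of_mem_nhds h0) d).2 ⟨y, hy, rfl⟩
  calc ⟪x, d⟫_ℝ = gauge K x * ⟪y, d⟫_ℝ := by rw [← real_inner_smul_left, hxy]
    _ ≤ gauge K x * gauge (polarSet K) d := mul_le_mul_of_nonneg_left hyd (gauge_nonneg x)

lemma exists_mem_polarSet_one_lt_inner (hKc : Convex ℝ K) (hK : IsClosed K)
    (h0 : (0 : Euc n) ∈ K) {x : Euc n} (hx : x ∉ K) : ∃ d ∈ polarSet K, 1 < ⟪d, x⟫_ℝ := by
  obtain ⟨f, u, hfK, hfx⟩ := geometric_hahn_banach_closed_point hKc hK hx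
  have hu : 0 < u := by simpa using hfK 0 h0
  refine ⟨u⁻¹ • (InnerProductSpace.toDual ℝ (Euc n)).symm f, fun y hy => ?_, ?_⟩
  · rw [real_inner_smul_left, InnerProductSpace.toDual_symm_apply, inv_mul_le_one₀ hu]
    exact (hfK y hy).le
  · rw [real_inner_smul_left, InnerProductSpace.toDual_symm_apply, one_lt_inv_mul₀ hu]
    exact hfx

lemma isGreatest_inner_gauge (hK : IsCompact K) (hKc : Convex ℝ K) (h0 : K ∈ 𝓝 0)
    (x : Euc n) : IsGreatest ((fun d => ⟪d, x⟫_ℝ) '' polarSet K) (gauge K x) := by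
  have hub : ∀ d ∈ polarSet K, ⟪d, x⟫_ℝ ≤ gauge K x := fun d hd =>
    calc ⟪d, x⟫_ℝ = ⟪x, d⟫_ℝ := real_inner_comm x d
      _ ≤ gauge K x * gauge (polarSet K) d := inner_le_gauge_mul_gauge_polarSet hK hKc h0 x d
      _ ≤ gauge K x := mul_le_of_le_one_right (gauge_nonneg x) (gauge_le_one_of_mem hd)
  obtain ⟨d₀, hd₀, hmax⟩ := (isCompact_polarSet h0).exists_isMaxOn ⟨0, zero_mem_polarSet⟩
    (f := fun d => ⟪d, x⟫_ℝ) (continuous_id.inner continuous_const).continuousOn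
  refine ⟨⟨d₀, hd₀, le_antisymm (hub d₀ hd₀) ?_⟩, Set.forall_mem_image.2 hub⟩
  refine le_of_forall_lt_imp_le_of_dense fun r hr => ?_
  rcases le_or_gt r 0 with hr0 | hr0
  · exact hr0.trans (by simpa using hmax (zero_mem_polarSet (K := K)))
  have hxr : r⁻¹ • x ∉ K := fun hmem =>
    hr.not_ge (gauge_le_of_mem hr0.le ((Set.mem_smul_set_iff_inv_smul_mem₀ hr0.ne' _ _).2 hmem))
  obtain ⟨d, hd, hlt⟩ := exists_mem_polarSet_one_lt_inner hKc hK.isClosed (mem_of_mem_nhds h0) hxr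
  rw [real_inner_smul_right, one_lt_inv_mul₀ hr0] at hlt
  exact hlt.le.trans (hmax hd)

lemma mem_normalCone_inter_frontier_polarSet (hK : IsCompact K) (hKc : Convex ℝ K)
    (h0 : K ∈ 𝓝 0) {y d : Euc n} (hy : gauge K y = 1) (hd : d ∈ polarSet K)
    (hdy : ⟪d, y⟫_ℝ = 1) : d ∈ normalCone K y ∩ frontier (polarSet K) := by
  refine ⟨fun z hz => ?_, ?_⟩
  · rw [inner_sub_right, hdy]
    linarith [hd z hz]
  rw [isClosed_polarSet.frontier_eq]
  refine ⟨hd, fun hint => ?_⟩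
  have hlt : gauge (polarSet K) d < 1 := interior_subset_gauge_lt_one _ hint
  have hle := inner_le_gauge_mul_gauge_polarSet hK hKc h0 y d
  rw [real_inner_comm, hdy, hy, one_mul] at hle
  exact hlt.not_ge hle

lemma differentiableAt_gauge (hK : IsCompact K) (hKc : Convex ℝ K) (h0 : K ∈ 𝓝 0)
    (hsmooth : SmoothSet K) {x : Euc n} (hx : x ≠ 0) : DifferentiableAt ℝ (gauge K) x := by
  have hmax := isGreatest_inner_gauge hK hKc h0
  obtain ⟨d₀, hd₀, hd₀x⟩ := (hmax x).1
  have hpos := gauge_pos_of_ne_zero hK.isBounded h0 hx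
  set y := (gauge K x)⁻¹ • x
  have hy : gauge K y = 1 := by
    rw [gauge_smul_of_nonneg (inv_nonneg.2 hpos.le), smul_eq_mul, inv_mul_cancel₀ hpos.ne']
  have hnormal : ∀ d ∈ polarSet K, ⟪d, x⟫_ℝ = gauge K x →
      d ∈ normalCone K y ∩ frontier (polarSet K) := fun d hd hdx =>
    mem_normalCone_inter_frontier_polarSet hK hKc h0 hy hd
      (by rw [real_inner_smul_right, hdx, inv_mul_cancel₀ hpos.ne'])
  obtain ⟨_, _, huniq⟩ := hsmooth y ((gauge_eq_one_iff_mem_frontier hKc h0).1 hy)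
  refine (hasGradientAt_of_isGreatest_inner (isCompact_polarSet h0) hmax hd₀ hd₀x
    fun d hd hdx => ?_).differentiableAt
  rw [huniq d (hnormal d hd hdx), huniq d₀ (hnormal d₀ hd₀ hd₀x)]

lemma mem_frontier_of_inner_eq_gauge_polarSet (hK : IsCompact K) (hKc : Convex ℝ K)
    (h0 : K ∈ 𝓝 0) {x d : Euc n} (hd : d ≠ 0) (hx : x ∈ K)
    (hxd : ⟪x, d⟫_ℝ = gauge (polarSet K) d) : x ∈ frontier K := by
  rw [hK.isClosed.frontier_eq]
  refine ⟨hx, fun hint => ?_⟩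
  have hs := gauge_pos_of_ne_zero (isBounded_polarSet h0) (polarSet_mem_nhds_zero hK.isBounded) hd
  have hlt : gauge K x < 1 := interior_subset_gauge_lt_one K hint
  have hle := inner_le_gauge_mul_gauge_polarSet hK hKc h0 x d
  rw [hxd] at hle
  nlinarith

lemma differentiableAt_gauge_polarSet (hK : IsCompact K) (hKc : Convex ℝ K) (h0 : K ∈ 𝓝 0)
    (hstrict : StrictlyConvexSet K) {d : Euc n} (hd : d ≠ 0) :
    DifferentiableAt ℝ (gauge (polarSet K)) d := by
  have hmax := isGreatest_inner_gauge_polarSet hK (mem_of_mem_nhds h0)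
  obtain ⟨x₀, hx₀, hx₀d : ⟪x₀, d⟫_ℝ = _⟩ := (hmax d).1
  have hfr : ∀ x ∈ K, ⟪x, d⟫_ℝ = gauge (polarSet K) d → x ∈ frontier K := fun x hx hxd =>
    mem_frontier_of_inner_eq_gauge_polarSet hK hKc h0 hd hx hxd
  refine (hasGradientAt_of_isGreatest_inner hK hmax hx₀ hx₀d fun x hx hxd => ?_).differentiableAt
  by_contra hne
  have hmid := hstrict x (hfr x hx hxd) x₀ (hfr x₀ hx₀ hx₀d) hne
  have hmidd : ⟪midpoint ℝ x x₀, d⟫_ℝ = gauge (polarSet K) d := by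
    rw [midpoint_eq_smul_add, real_inner_smul_left, inner_add_left, hxd, hx₀d]
    simp only [invOf_eq_inv]
    ring
  have hmid_fr := hfr _ (interior_subset hmid) hmidd
  rw [hK.isClosed.frontier_eq] at hmid_fr
  exact hmid_fr.2 hmid

lemma FstarK_eq (hK : IsCompact K) (hKc : Convex ℝ K) (h0 : K ∈ 𝓝 0) (d : Euc n) :
    FstarK K d = logBarrierConj (gauge (polarSet K) d) := by
  set s := gauge (polarSet K) d
  have hs0 : 0 ≤ s := gauge_nonneg d
  have hs : -1 < s := by linarith
  obtain ⟨x₀, hx₀, hx₀d : ⟪x₀, d⟫_ℝ = s⟩ :=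
    (isGreatest_inner_gauge_polarSet hK (mem_of_mem_nhds h0) d).1
  -- `x₀` lies on the boundary of `K` unless `s = 0`
  have hx₀s : gauge K x₀ * s = s := by
    have hle := inner_le_gauge_mul_gauge_polarSet hK hKc h0 x₀ d
    have hx₀1 := gauge_le_one_of_mem hx₀
    rw [hx₀d] at hle
    nlinarith
  have hgauge : gauge K ((s / (1 + s)) • x₀) = s / (1 + s) := by
    rw [gauge_smul_of_nonneg (div_nonneg hs0 (by linarith)), smul_eq_mul, div_mul_eq_mul_div,
      mul_comm, hx₀s]
  refine IsGreatest.csSup_eq ⟨⟨(s / (1 + s)) • x₀, ?_, ?_⟩, ?_⟩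
  · show gauge K _ < 1
    rw [hgauge, div_lt_one (by linarith)]
    linarith
  · show ⟪_, d⟫_ℝ - logBarrier (gauge K _) = _
    rw [hgauge, real_inner_smul_left, hx₀d]
    exact mul_sub_logBarrier_eq hs
  · rintro _ ⟨x, hx : gauge K x < 1, rfl⟩
    show ⟪x, d⟫_ℝ - logBarrier (gauge K x) ≤ _
    linarith [inner_le_gauge_mul_gauge_polarSet hK hKc h0 x d, mul_sub_logBarrier_le hx hs]

end Polar

/-- Identities for the barrier `F_K` and its Fenchel conjugate:
`∇F_K(x) = (‖x‖_K / (1 - ‖x‖_K)) ∇‖·‖_K(x)`, `F_K*(d) = ‖d‖_{K°} - ln(1 + ‖d‖_{K°})`,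
`∇F_K*(d) = (‖d‖_{K°} / (1 + ‖d‖_{K°})) ∇‖·‖_{K°}(d)`, with `F_K` differentiable on
`int K` and `F_K*` differentiable on all of `ℝⁿ`. -/
theorem barrier_identities {n : ℕ}
    (K : Set (Euc n)) (hKcomp : IsCompact K) (hKconv : Convex ℝ K)
    (h0 : (0 : Euc n) ∈ interior K)
    (hstrict : StrictlyConvexSet K) (hsmooth : SmoothSet K) :
    (∀ x : Euc n, 0 < gauge K x → gauge K x < 1 →
      gradient (FK K) x = (gauge K x / (1 - gauge K x)) • gradient (gauge K) x) ∧
    (∀ d : Euc n, FstarK K d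
        = gauge (polarSet K) d - Real.log (1 + gauge (polarSet K) d)) ∧
    (∀ d : Euc n, d ≠ 0 →
      gradient (FstarK K) d
        = (gauge (polarSet K) d / (1 + gauge (polarSet K) d)) •
            gradient (gauge (polarSet K)) d) ∧
    (∀ x ∈ interior K, DifferentiableAt ℝ (FK K) x) ∧
    (∀ d : Euc n, DifferentiableAt ℝ (FstarK K) d) := by
  have hK0 : K ∈ 𝓝 0 := mem_interior_iff_mem_nhds.1 h0
  have hFK : FK K = logBarrier ∘ gauge K := rfl
  have hFstarK : FstarK K = logBarrierConj ∘ gauge (polarSet K) :=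
    funext (FstarK_eq hKcomp hKconv hK0)
  have hgauge := fun x (hx : x ≠ 0) => differentiableAt_gauge hKcomp hKconv hK0 hsmooth hx
  have hgaugePolar := fun d (hd : d ≠ 0) =>
    differentiableAt_gauge_polarSet hKcomp hKconv hK0 hstrict hd
  have hs : ∀ d, -1 < gauge (polarSet K) d := fun d =>
    neg_one_lt_zero.trans_le (gauge_nonneg d)
  refine ⟨fun x hx0 hx1 => ?_, FstarK_eq hKcomp hKconv hK0, fun d hd => ?_, fun x hx => ?_,
    fun d => ?_⟩
  · have hx : x ≠ 0 := by rintro rfl; simp at hx0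
    rw [hFK, (hasDerivAt_logBarrier hx1).gradient_comp (hgauge x hx)]
  · rw [hFstarK, (hasDerivAt_logBarrierConj (hs d)).gradient_comp (hgaugePolar d hd)]
  · rw [hFK]
    rcases eq_or_ne x 0 with rfl | hx0
    · exact differentiableAt_comp_gauge_zero (by simpa using hasDerivAt_logBarrier one_pos) hK0
    · exact (hasDerivAt_logBarrier (interior_subset_gauge_lt_one K hx)).differentiableAt.comp x
        (hgauge x hx0)
  · rw [hFstarK]
    rcases eq_or_ne d 0 with rfl | hd0
    · exact differentiableAt_comp_gauge_zero
        (by simpa using hasDerivAt_logBarrierConj neg_one_lt_zero)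
        (polarSet_mem_nhds_zero hKcomp.isBounded)
    · exact (hasDerivAt_logBarrierConj (hs d)).differentiableAt.comp d (hgaugePolar d hd0)
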